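/- For all ordinals α, β < ε₀ and every natural number n, if α <_n β then H_α(n) ≤ H_β(n), where <_n is the transitive closure of the relation {(α,β) : α = β[n]}. -/

import Mathlib

open ONote in
/-- `α` is a successor ordinal notation (its Cantor normal form ends with `ω^0·m`). -/
def ONote.isSucc : ONote → Prop
  | ONote.zero => False
  | ONote.oadd e _ ONote.zero => e = 0
  | ONote.oadd _ _ (ONote.oadd e n a) => ONote.isSucc (ONote.oadd e n a)

instance : DecidablePred ONote.isSucc := by
  intro a
  induction a with
  | zero => exact .isFalse (by simp [ONote.isSucc])
  | oadd e n a ihe iha =>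
    cases a with
    | zero => exact decidable_of_iff (e = 0) Iff.rfl
    | oadd e' n' a' => exact iha

/-- The standard fundamental sequence assignment `α[x]` on Cantor normal forms:
`0[x] = 0`, `(α+1)[x] = α`, and for `λ` with last term `ω^(β+1)` one has
`λ[x] = (λ - ω^(β+1)) + ω^β·x`, while for last term `ω^γ` (`γ` limit),
`λ[x] = (λ - ω^γ) + ω^(γ[x])`. -/
def ONote.fseq : ONote → ℕ → ONote
  | ONote.zero, _ => ONote.zero
  | ONote.oadd e m (ONote.oadd e' m' a'), x =>
      ONote.oadd e m (ONote.fseq (ONote.oadd e' m' a') x)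
  | ONote.oadd ONote.zero m ONote.zero, _ =>
      if _h : m = 1 then ONote.zero else ONote.oadd ONote.zero (m - 1) ONote.zero
  | ONote.oadd (ONote.oadd e1 m1 a1) m ONote.zero, x =>
      let e := ONote.oadd e1 m1 a1
      let tail : ONote → ONote :=
        fun t => if m = 1 then t else ONote.oadd e (m - 1) t
      if ONote.isSucc e then
        match x with
        | 0 => tail ONote.zero
        | Nat.succ y => tail (ONote.oadd (ONote.fseq e (y+1)) (Nat.succPNat y) ONote.zero)
      else tail (ONote.oadd (ONote.fseq e x) 1 ONote.zero)

/-- `α <_n β` : transitive closure of `α = β[n]`. -/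
def ONote.stepLt (n : ℕ) (a b : ONote) : Prop :=
  Relation.TransGen (fun x y => x = ONote.fseq y n) a b

/-- `α ≤_n β`. -/
def ONote.stepLe (n : ℕ) (a b : ONote) : Prop :=
  ONote.stepLt n a b ∨ a = b

/-- The graph of the Hardy hierarchy: `H_0(x) = x`, `H_{α+1}(x) = H_α(x+1)`,
`H_λ(x) = H_{λ[x]}(x)` for limit `λ`. -/
inductive HardyRel : ONote → ℕ → ℕ → Prop
  | zero (x : ℕ) : HardyRel ONote.zero x x
  | succ {a : ONote} {x y : ℕ} (h : a.isSucc) (hrec : HardyRel (a.fseq x) (x + 1) y) :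
      HardyRel a x y
  | limit {a : ONote} {x y : ℕ} (h0 : a ≠ ONote.zero) (h : ¬ a.isSucc)
      (hrec : HardyRel (a.fseq x) x y) : HardyRel a x y

open scoped Classical in
/-- The Hardy function `H_α : ℕ → ℕ` (for `α` in normal form the defining
recursion terminates, so `hardy` is the unique value of the graph `HardyRel`). -/
noncomputable def hardy (a : ONote) (x : ℕ) : ℕ :=
  if h : ∃ y, HardyRel a x y then h.choose else 0

/-!
`H_β` is monotone, and `α <_n β` implies `H_α(n) ≤ H_β(n)`: both claims are proved together by
well-founded induction on `β`. Since `α <_n β` factors as `α ≤_n β[n]`, the second claim for `β`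
follows from the second claim for `β[n]` and `H_{β[n]}(n) ≤ H_β(n)`, an equality at limits and,
at successors, `H_{β[n]}(n) ≤ H_{β[n]}(n+1)`, i.e. monotonicity of `H_{β[n]}`. Monotonicity of a
limit `H_λ` needs `H_{λ[n]}(n+1) ≤ H_{λ[n+1]}(n+1)`: this is the second claim for `λ[n+1]`, applied
through the Bachmann property `λ[n] ≤_{n+1} λ[n+1]` of the fundamental sequences.
-/

namespace ONote

theorem fseq_zero (x : ℕ) : fseq 0 x = 0 := rfl

theorem fseq_oadd_oadd (e e' a' : ONote) (m m' : ℕ+) (x : ℕ) :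
    fseq (oadd e m (oadd e' m' a')) x = oadd e m (fseq (oadd e' m' a') x) := by
  simp [fseq]

theorem fseq_one (x : ℕ) : fseq (oadd 0 1 0) x = 0 := by
  simp [fseq]

theorem fseq_oadd_one_of_isSucc_zero {c : ONote} (hc : isSucc c) :
    fseq (oadd c 1 0) 0 = 0 := by
  cases c with
  | zero => exact hc.elim
  | oadd => simp [fseq, hc]

theorem fseq_oadd_one_of_isSucc_succ {c : ONote} (hc : isSucc c) (y : ℕ) :
    fseq (oadd c 1 0) (y + 1) = oadd (fseq c (y + 1)) y.succPNat 0 := by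
  cases c with
  | zero => exact hc.elim
  | oadd => simp [fseq, hc]

theorem fseq_oadd_one_of_not_isSucc {c : ONote} (hc0 : c ≠ 0) (hc : ¬ isSucc c) (x : ℕ) :
    fseq (oadd c 1 0) x = oadd (fseq c x) 1 0 := by
  cases c with
  | zero => exact (hc0 rfl).elim
  | oadd => simp [fseq, hc]

/-- `ω^c·(m+1)[x] = ω^c·m + ω^c[x]`. -/
theorem fseq_oadd_succ (c : ONote) (m : ℕ+) (x : ℕ) :
    fseq (oadd c (m + 1) 0) x = oadd c m (fseq (oadd c 1 0) x) := by
  have hm : m + 1 ≠ 1 := by simp [← PNat.coe_inj]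
  have hsub : m + 1 - 1 = m := PNat.eq (by simp)
  rcases c with _ | ⟨e, k, a⟩
  · simp [fseq, hm, hsub]
  · by_cases hc : isSucc (oadd e k a)
    · cases x <;> simp [fseq, hc, hm, hsub]
    · simp [fseq, hc, hm, hsub]

theorem fseq_eq_of_isSucc : ∀ {a : ONote}, isSucc a → ∀ x y, fseq a x = fseq a y
  | 0, h, _, _ => h.elim
  | oadd e m (oadd e' m' a'), h, x, y => by
    rw [fseq_oadd_oadd, fseq_oadd_oadd, fseq_eq_of_isSucc (a := oadd e' m' a') h x y]
  | oadd e m 0, h, x, y => by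
    obtain rfl : e = 0 := h
    rcases eq_or_ne m 1 with rfl | hm
    · rw [fseq_one, fseq_one]
    · obtain ⟨k, rfl⟩ := PNat.exists_eq_succ_of_ne_one hm
      rw [fseq_oadd_succ, fseq_oadd_succ, fseq_one, fseq_one]

theorem nf_fseq_oadd_one_and_lt {c : ONote} (hc : NF c)
    (ih : ∀ x, NF (fseq c x) ∧ (c ≠ 0 → fseq c x < c)) (x : ℕ) :
    NF (fseq (oadd c 1 0) x) ∧ fseq (oadd c 1 0) x < oadd c 1 0 := by
  have key : ∀ (y : ℕ) (k : ℕ+),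
      NF (oadd (fseq c y) k 0) ∧ (c ≠ 0 → oadd (fseq c y) k 0 < oadd c 1 0) := fun y k =>
    have hnf : NF (oadd (fseq c y) k 0) := (ih y).1.oadd k NFBelow.zero
    ⟨hnf, fun hc0 => oadd_lt_oadd_1 hnf ((ih y).2 hc0)⟩
  rcases eq_or_ne c 0 with rfl | hc0
  · rw [fseq_one]
    exact ⟨NF.zero, oadd_pos _ _ _⟩
  by_cases hs : isSucc c
  · cases x with
    | zero =>
      rw [fseq_oadd_one_of_isSucc_zero hs]
      exact ⟨NF.zero, oadd_pos _ _ _⟩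
    | succ y =>
      rw [fseq_oadd_one_of_isSucc_succ hs]
      exact ⟨(key _ _).1, (key _ _).2 hc0⟩
  · rw [fseq_oadd_one_of_not_isSucc hc0 hs]
    exact ⟨(key _ _).1, (key _ _).2 hc0⟩

theorem nf_fseq_and_fseq_lt : ∀ {a : ONote}, NF a → ∀ x, NF (fseq a x) ∧ (a ≠ 0 → fseq a x < a)
  | 0, _, _ => ⟨NF.zero, fun h => (h rfl).elim⟩
  | oadd e m (oadd e' m' a'), h, x => by
    obtain ⟨hnf, hlt⟩ := nf_fseq_and_fseq_lt h.snd x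
    have hlt := hlt (oadd_pos _ _ _).ne'
    rw [fseq_oadd_oadd]
    exact ⟨h.fst.oadd m (NF.below_of_lt' ((lt_def.1 hlt).trans h.snd'.repr_lt) hnf),
      fun _ => oadd_lt_oadd_3 hlt⟩
  | oadd c m 0, h, x => by
    obtain ⟨hnf, hlt⟩ := nf_fseq_oadd_one_and_lt h.fst (nf_fseq_and_fseq_lt h.fst) x
    rcases eq_or_ne m 1 with rfl | hm
    · exact ⟨hnf, fun _ => hlt⟩
    obtain ⟨k, rfl⟩ := PNat.exists_eq_succ_of_ne_one hm
    have hbelow : repr (fseq (oadd c 1 0) x) < Ordinal.omega0 ^ repr c := by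
      simpa [lt_def, repr] using hlt
    have hnf' : NF (oadd c k (fseq (oadd c 1 0) x)) := h.fst.oadd k (NF.below_of_lt' hbelow hnf)
    rw [fseq_oadd_succ]
    exact ⟨hnf', fun _ => oadd_lt_oadd_2 hnf' (by simp)⟩

theorem NF.fseq {a : ONote} (h : NF a) (x : ℕ) : NF (fseq a x) :=
  (nf_fseq_and_fseq_lt h x).1

theorem fseq_lt {a : ONote} (h : NF a) (h0 : a ≠ 0) (x : ℕ) : fseq a x < a :=
  (nf_fseq_and_fseq_lt h x).2 h0

open Relation

variable {x : ℕ} {a b c : ONote}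

theorem stepLe_iff_reflTransGen :
    stepLe x a b ↔ ReflTransGen (fun a b => a = fseq b x) a b := by
  rw [reflTransGen_iff_eq_or_transGen, stepLe, or_comm, eq_comm, stepLt]

theorem stepLe_refl (x : ℕ) (a : ONote) : stepLe x a a := Or.inr rfl

theorem stepLe.trans (hab : stepLe x a b) (hbc : stepLe x b c) : stepLe x a c := by
  rw [stepLe_iff_reflTransGen] at *
  exact hab.trans hbc

theorem stepLe_of_eq_fseq (h : a = fseq b x) : stepLe x a b := Or.inl (.single h)

theorem stepLe.stepLt_of_eq_fseq (hab : stepLe x a b) (h : b = fseq c x) : stepLt x a c := by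
  rcases hab with hab | rfl
  · exact hab.tail h
  · exact .single h

theorem eq_zero_of_stepLt_zero (h : stepLt x a 0) : a = 0 := by
  induction h using TransGen.head_induction_on with
  | single h => exact h
  | head h _ ih => rw [h, ih, fseq_zero]

theorem stepLe.oadd_tail (e : ONote) (m : ℕ+) (h : stepLe x a b) :
    stepLe x (oadd e m a) (oadd e m b) := by
  rw [stepLe_iff_reflTransGen] at *
  refine ReflTransGen.lift' (oadd e m) (fun s t hst => ?_) _ _ h
  cases t with
  | zero => exact hst ▸ .refl
  | oadd => exact .single (by rw [hst, fseq_oadd_oadd])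

theorem zero_stepLe (x : ℕ) {a : ONote} (ha : NF a) : stepLe x 0 a :=
  if h0 : a = 0 then h0 ▸ stepLe_refl x 0
  else Or.inl ((zero_stepLe x (ha.fseq x)).stepLt_of_eq_fseq rfl)
termination_by a
decreasing_by exact fseq_lt ha h0 x

theorem stepLt_oadd_succ (hc : NF c) (m : ℕ+) :
    stepLt x (oadd c m 0) (oadd c (m + 1) 0) :=
  ((zero_stepLe x ((hc.oadd 1 NFBelow.zero).fseq x)).oadd_tail c m).stepLt_of_eq_fseq
    (fseq_oadd_succ c m x).symm

theorem stepLe_oadd_of_le (hc : NF c) {k m : ℕ+} (hkm : k ≤ m) :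
    stepLe x (oadd c k 0) (oadd c m 0) := by
  induction m using PNat.recOn generalizing k with
  | one => exact le_antisymm hkm (by simp) ▸ stepLe_refl x _
  | succ m ih =>
    rcases hkm.eq_or_lt with rfl | hlt
    · exact stepLe_refl x _
    · exact (ih (PNat.lt_add_one_iff.1 hlt)).trans (Or.inl (stepLt_oadd_succ hc m))

theorem stepLe_oadd_fseq_one (hx : x ≠ 0) (hb : NF b) :
    stepLe x (oadd (fseq b x) 1 0) (oadd b 1 0) := by
  rcases eq_or_ne b 0 with rfl | hb0
  · exact stepLe_refl x _
  by_cases hs : isSucc b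
  · obtain ⟨y, rfl⟩ := Nat.exists_eq_succ_of_ne_zero hx
    exact Or.inl ((stepLe_oadd_of_le (hb.fseq _) (by simp)).stepLt_of_eq_fseq
      (fseq_oadd_one_of_isSucc_succ hs y).symm)
  · exact stepLe_of_eq_fseq (fseq_oadd_one_of_not_isSucc hb0 hs x).symm

theorem stepLe.oadd_one (hx : x ≠ 0) (hb : NF b) (h : stepLe x a b) :
    stepLe x (oadd a 1 0) (oadd b 1 0) := by
  rw [stepLe_iff_reflTransGen] at h
  induction h with
  | refl => exact stepLe_refl x _
  | tail _ hst ih =>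
    subst hst
    exact (ih (hb.fseq x)).trans (stepLe_oadd_fseq_one hx hb)

theorem stepLe_fseq_oadd_one_succ (hc : NF c)
    (ih : ∀ n, stepLe (n + 1) (fseq c n) (fseq c (n + 1))) (n : ℕ) :
    stepLe (n + 1) (fseq (oadd c 1 0) n) (fseq (oadd c 1 0) (n + 1)) := by
  rcases eq_or_ne c 0 with rfl | hc0
  · rw [fseq_one, fseq_one]
    exact stepLe_refl _ _
  by_cases hs : isSucc c
  · cases n with
    | zero =>
      rw [fseq_oadd_one_of_isSucc_zero hs]
      exact zero_stepLe _ ((hc.oadd 1 NFBelow.zero).fseq _)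
    | succ y =>
      rw [fseq_oadd_one_of_isSucc_succ hs, fseq_oadd_one_of_isSucc_succ hs,
        fseq_eq_of_isSucc hs (y + 1 + 1) (y + 1)]
      exact stepLe_oadd_of_le (hc.fseq _) (Nat.succPNat_le_succPNat.2 y.le_succ)
  · rw [fseq_oadd_one_of_not_isSucc hc0 hs, fseq_oadd_one_of_not_isSucc hc0 hs]
    exact (ih n).oadd_one n.succ_ne_zero (hc.fseq _)

theorem stepLe_fseq_succ : ∀ {b : ONote}, NF b → ∀ n, stepLe (n + 1) (fseq b n) (fseq b (n + 1))
  | 0, _, n => stepLe_refl _ _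
  | oadd e m (oadd e' m' a'), h, n => by
    rw [fseq_oadd_oadd, fseq_oadd_oadd]
    exact (stepLe_fseq_succ h.snd n).oadd_tail e m
  | oadd c m 0, h, n => by
    have hc := stepLe_fseq_oadd_one_succ h.fst (stepLe_fseq_succ h.fst) n
    rcases eq_or_ne m 1 with rfl | hm
    · exact hc
    obtain ⟨k, rfl⟩ := PNat.exists_eq_succ_of_ne_one hm
    rw [fseq_oadd_succ, fseq_oadd_succ]
    exact hc.oadd_tail c k

end ONote

open ONote

theorem HardyRel.unique {a : ONote} {x y y' : ℕ} (h : HardyRel a x y) (h' : HardyRel a x y') :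
    y = y' := by
  induction h generalizing y' with
  | zero =>
    cases h' with
    | zero => rfl
    | succ hs _ => exact hs.elim
    | limit h0 _ _ => exact (h0 rfl).elim
  | succ hs _ ih =>
    cases h' with
    | zero => exact hs.elim
    | succ _ hrec => exact ih hrec
    | limit _ hs' _ => exact (hs' hs).elim
  | limit h0 hs _ ih =>
    cases h' with
    | zero => exact (h0 rfl).elim
    | succ hs' _ => exact (hs hs').elim
    | limit _ _ hrec => exact ih hrec

theorem exists_hardyRel {a : ONote} (ha : NF a) (x : ℕ) : ∃ y, HardyRel a x y :=
  if h0 : a = 0 then h0 ▸ ⟨x, .zero x⟩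
  else if hs : isSucc a then
    (exists_hardyRel (ha.fseq x) (x + 1)).imp fun _ => .succ hs
  else
    (exists_hardyRel (ha.fseq x) x).imp fun _ => .limit h0 hs
termination_by a
decreasing_by all_goals exact fseq_lt ha h0 x

theorem HardyRel.hardy_eq {a : ONote} {x y : ℕ} (ha : NF a) (h : HardyRel a x y) :
    hardy a x = y := by
  have he := exists_hardyRel ha x
  rw [hardy, dif_pos he]
  exact he.choose_spec.unique h

theorem hardyRel_hardy {a : ONote} (ha : NF a) (x : ℕ) : HardyRel a x (hardy a x) := by
  obtain ⟨y, hy⟩ := exists_hardyRel ha x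
  exact (hy.hardy_eq ha).symm ▸ hy

theorem hardy_zero : hardy 0 = id :=
  funext fun x => (HardyRel.zero x).hardy_eq NF.zero

theorem hardy_of_isSucc {a : ONote} (ha : NF a) (hs : isSucc a) (x : ℕ) :
    hardy a x = hardy (fseq a x) (x + 1) :=
  (HardyRel.succ hs (hardyRel_hardy (ha.fseq x) _)).hardy_eq ha

theorem hardy_of_not_isSucc {a : ONote} (ha : NF a) (h0 : a ≠ 0) (hs : ¬ isSucc a) (x : ℕ) :
    hardy a x = hardy (fseq a x) x :=
  (HardyRel.limit h0 hs (hardyRel_hardy (ha.fseq x) _)).hardy_eq ha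

theorem hardy_fseq_le {b : ONote} (hb : NF b) {n : ℕ} (hmono : Monotone (hardy (fseq b n))) :
    hardy (fseq b n) n ≤ hardy b n := by
  rcases eq_or_ne b 0 with rfl | hb0
  · rfl
  by_cases hs : isSucc b
  · rw [hardy_of_isSucc hb hs]
    exact hmono n.le_succ
  · rw [hardy_of_not_isSucc hb hb0 hs]

theorem hardy_le_hardy_succ {b : ONote} (hb : NF b) (hmono : ∀ n, Monotone (hardy (fseq b n)))
    (hle : ∀ {n a}, stepLt n a (fseq b n) → hardy a n ≤ hardy (fseq b n) n) (n : ℕ) :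
    hardy b n ≤ hardy b (n + 1) := by
  rcases eq_or_ne b 0 with rfl | hb0
  · simp [hardy_zero]
  by_cases hs : isSucc b
  · rw [hardy_of_isSucc hb hs, hardy_of_isSucc hb hs, fseq_eq_of_isSucc hs (n + 1) n]
    exact hmono n (n + 1).le_succ
  · rw [hardy_of_not_isSucc hb hb0 hs, hardy_of_not_isSucc hb hb0 hs]
    calc hardy (fseq b n) n ≤ hardy (fseq b n) (n + 1) := hmono n n.le_succ
      _ ≤ hardy (fseq b (n + 1)) (n + 1) := by
        rcases stepLe_fseq_succ hb n with h | h
        · exact hle h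
        · rw [h]

theorem monotone_hardy_and_hardy_le_of_stepLt {b : ONote} (hb : NF b) :
    Monotone (hardy b) ∧ ∀ {n a}, stepLt n a b → hardy a n ≤ hardy b n :=
  if hb0 : b = 0 then by
    subst hb0
    exact ⟨hardy_zero ▸ monotone_id, fun h => eq_zero_of_stepLt_zero h ▸ le_rfl⟩
  else by
    have ih n := monotone_hardy_and_hardy_le_of_stepLt (hb.fseq n)
    refine ⟨monotone_nat_of_le_succ (hardy_le_hardy_succ hb (ih · |>.1) (ih _ |>.2)),
      fun {n a} h => ?_⟩
    obtain ⟨c, hac, rfl⟩ := Relation.TransGen.tail'_iff.1 h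
    calc hardy a n ≤ hardy (fseq b n) n := by
          rcases Relation.reflTransGen_iff_eq_or_transGen.1 hac with rfl | hac
          · rfl
          · exact (ih n).2 hac
      _ ≤ hardy b n := hardy_fseq_le hb (ih n).1
termination_by b
decreasing_by exact fseq_lt hb hb0 _

theorem hardy_le_of_stepLt_general (a b : ONote) (hb : b.NF) (n : ℕ)
    (h : ONote.stepLt n a b) : hardy a n ≤ hardy b n :=
  (monotone_hardy_and_hardy_le_of_stepLt hb).2 h

/-- if `α <_n β` then `H_α(n) ≤ H_β(n)`. -/
theorem hardy_le_of_stepLt (a b : ONote) (ha : a.NF) (hb : b.NF) (n : ℕ)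
    (h : ONote.stepLt n a b) : hardy a n ≤ hardy b n :=
  hardy_le_of_stepLt_general a b hb n h
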